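/- arXiv:1812.06495 — 2 statements merged into one kernel-verified Lean document; each statement's English description precedes it below -/
import Mathlib

section
/- Let Γ = ℤ/pℤ * ℤ/qℤ be the free product, with generators a (order p) and b (order q), and let ρ : Γ → GL(V) be a finite-dimensional complex representation with V^ρ = 0. Then the map sending v ∈ V to the 1-cocycle κ_v determined by κ_v(a) = ρ(a)v − v and κ_v(b) = 0 induces a surjective linear map V → H¹(Γ, ρ) with kernel V^A + V^B, where V^A = ker(ρ(a) − id) and V^B = ker(ρ(b) − id). In particular dim H¹(Γ, ρ) = dim V − dim V^A − dim V^B. -/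
/-- The submodule of 1-cocycles `κ : Γ → V` for a representation `ρ`. -/
def oneCocycles {Γ V : Type*} [Group Γ] [AddCommGroup V] [Module ℂ V]
    (ρ : Representation ℂ Γ V) : Submodule ℂ (Γ → V) where
  carrier := {κ | ∀ g h : Γ, κ (g * h) = ρ g (κ h) + κ g}
  add_mem' := by
    intro f₁ f₂ h₁ h₂ g h
    simp only [Pi.add_apply, h₁ g h, h₂ g h, map_add]
    abel
  zero_mem' := by intro g h; simp
  smul_mem' := by
    intro c f hf g h
    simp only [Pi.smul_apply, hf g h, map_smul, smul_add]

/-- The coboundary map `V → (Γ → V)`, `v ↦ (γ ↦ ρ(γ)v - v)`. -/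
def coboundary {Γ V : Type*} [Group Γ] [AddCommGroup V] [Module ℂ V]
    (ρ : Representation ℂ Γ V) : V →ₗ[ℂ] (Γ → V) where
  toFun v := fun γ => ρ γ v - v
  map_add' v w := by funext γ; simp only [map_add, Pi.add_apply]; abel
  map_smul' c v := by funext γ; simp [map_smul, smul_sub]

lemma coboundary_mem_oneCocycles {Γ V : Type*} [Group Γ] [AddCommGroup V] [Module ℂ V]
    (ρ : Representation ℂ Γ V) (v : V) : coboundary ρ v ∈ oneCocycles ρ := by
  intro g h
  simp only [coboundary, LinearMap.coe_mk, AddHom.coe_mk, map_mul, map_sub,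
    Module.End.mul_apply]
  abel

/-- First group cohomology `H¹(Γ, ρ)`: 1-cocycles modulo 1-coboundaries. -/
def H1 {Γ V : Type*} [Group Γ] [AddCommGroup V] [Module ℂ V]
    (ρ : Representation ℂ Γ V) : Type _ :=
  (oneCocycles ρ) ⧸ (LinearMap.range
    ((coboundary ρ).codRestrict (oneCocycles ρ) (coboundary_mem_oneCocycles ρ)))

noncomputable instance {Γ V : Type*} [Group Γ] [AddCommGroup V] [Module ℂ V]
    (ρ : Representation ℂ Γ V) : AddCommGroup (H1 ρ) :=
  inferInstanceAs (AddCommGroup ((oneCocycles ρ) ⧸ (LinearMap.range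
    ((coboundary ρ).codRestrict (oneCocycles ρ) (coboundary_mem_oneCocycles ρ)))))

noncomputable instance {Γ V : Type*} [Group Γ] [AddCommGroup V] [Module ℂ V]
    (ρ : Representation ℂ Γ V) : Module ℂ (H1 ρ) :=
  inferInstanceAs (Module ℂ ((oneCocycles ρ) ⧸ (LinearMap.range
    ((coboundary ρ).codRestrict (oneCocycles ρ) (coboundary_mem_oneCocycles ρ)))))

/-!
A cocycle on `G ∗ H` is determined by its restrictions to `G` and to `H`, and the cocycle `κ_v`
exists because it is the orbit map of `0` under an affine action of `G ∗ H` with linear part `ρ`,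
built from the universal property of the free product. Over `ℂ` every cocycle of a finite group
is a coboundary (average it), so modulo coboundaries any cocycle can be made to vanish on `H`,
after which its restriction to `G` is the coboundary of some `v`, i.e. it is `κ_v`. If
`κ_v = δw`, then `w` is fixed by `H` and `v - w` by `G`, which gives the kernel `V^A + V^B`;
since `V^A ∩ V^B = V^Γ = 0`, rank–nullity gives the dimension formula.
-/

theorem coboundary_apply {Γ V : Type*} [Group Γ] [AddCommGroup V] [Module ℂ V]
    (ρ : Representation ℂ Γ V) (v : V) (g : Γ) : coboundary ρ v g = ρ g v - v :=
  rfl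

namespace oneCocycles

variable {Γ V : Type*} [Group Γ] [AddCommGroup V] [Module ℂ V] {ρ : Representation ℂ Γ V}
  {κ : Γ → V}

theorem comp_mem (hκ : κ ∈ oneCocycles ρ) {Γ' : Type*} [Group Γ'] (f : Γ' →* Γ) :
    κ ∘ f ∈ oneCocycles (ρ.comp f) := fun g h => by
  simpa using hκ (f g) (f h)

/-- Summing the cocycle identity over `g` shows that `w = -|Γ|⁻¹ ∑_g κ g` works. -/
theorem exists_coboundary_eq_of_fintype [Fintype Γ] (hκ : κ ∈ oneCocycles ρ) :
    ∃ w, coboundary ρ w = κ := by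
  have hcard : (Fintype.card Γ : ℂ) ≠ 0 := Nat.cast_ne_zero.2 Fintype.card_ne_zero
  refine ⟨-(Fintype.card Γ : ℂ)⁻¹ • ∑ g, κ g, funext fun h => ?_⟩
  have hsum : ρ h (∑ g, κ g) = ∑ g, κ g - (Fintype.card Γ : ℂ) • κ h := by
    calc ρ h (∑ g, κ g) = ∑ g, (κ (h * g) - κ h) := by
          simp only [map_sum, hκ h, add_sub_cancel_right]
      _ = ∑ g, κ g - (Fintype.card Γ : ℂ) • κ h := by
          rw [Finset.sum_sub_distrib, Finset.sum_const, Finset.card_univ, Nat.cast_smul_eq_nsmul,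
            Fintype.sum_bijective (h * ·) (Group.mulLeft_bijective h) _ κ fun _ => rfl]
  rw [coboundary_apply, map_smul, hsum, smul_sub, neg_smul, neg_smul, inv_smul_smul₀ hcard]
  abel

end oneCocycles

namespace H1

variable {Γ V : Type*} [Group Γ] [AddCommGroup V] [Module ℂ V] (ρ : Representation ℂ Γ V)

def mk : oneCocycles ρ →ₗ[ℂ] H1 ρ :=
  Submodule.mkQ _

theorem mk_surjective : Function.Surjective (mk ρ) :=
  Submodule.mkQ_surjective _

theorem mk_eq_zero_iff {κ : oneCocycles ρ} : mk ρ κ = 0 ↔ ∃ w, coboundary ρ w = κ :=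
  (Submodule.Quotient.mk_eq_zero _).trans (exists_congr fun _ => Subtype.ext_iff)

theorem mk_coboundary (w : V) : mk ρ ⟨coboundary ρ w, coboundary_mem_oneCocycles ρ w⟩ = 0 :=
  (mk_eq_zero_iff ρ).2 ⟨w, rfl⟩

end H1

section Coprod

open Monoid.Coprod Representation

variable {G H V : Type*} [Group G] [Group H] [AddCommGroup V] [Module ℂ V]
  (ρ : Representation ℂ (G ∗ H) V)

theorem oneCocycles.coprod_ext {κ κ' : G ∗ H → V} (hκ : κ ∈ oneCocycles ρ)
    (hκ' : κ' ∈ oneCocycles ρ) (hinl : ∀ g, κ (inl g) = κ' (inl g))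
    (hinr : ∀ h, κ (inr h) = κ' (inr h)) : κ = κ' := by
  funext x
  induction x using induction_on with
  | inl g => exact hinl g
  | inr h => exact hinr h
  | mul x y hx hy => rw [hκ, hκ', hx, hy]

theorem Representation.invariants_comp_inl_inf_invariants_comp_inr :
    invariants (ρ.comp inl) ⊓ invariants (ρ.comp inr) = invariants ρ := by
  refine le_antisymm (fun v hv x => ?_) fun v hv => ⟨fun g => hv _, fun h => hv _⟩
  obtain ⟨hG, hH⟩ := hv
  induction x using induction_on with
  | inl g => exact hG g
  | inr h => exact hH h
  | mul x y hx hy => rw [map_mul, Module.End.mul_apply, hy, hx]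

/-- The affine action of `G ∗ H` with linear part `ρ` in which `g ∈ G` acts by
`w ↦ ρ g (w + v) - v` and `H` acts linearly; its orbit map at `0` is the cocycle `κ_v`. -/
def coprodAffineAction (v : V) : G ∗ H →* Equiv.Perm V :=
  let P := (MulAction.toPermHom (Module.End ℂ V)ˣ V).comp ρ.asGroupHom
  lift ((MulAut.conj (Equiv.addRight (-v))).toMonoidHom.comp (P.comp inl)) (P.comp inr)

theorem coprodAffineAction_inl (v : V) (g : G) (w : V) :
    coprodAffineAction ρ v (inl g) w = ρ (inl g) (w + v) - v := by
  simp [coprodAffineAction, MulAut.conj_apply, Units.smul_def, ρ.asGroupHom_apply,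
    sub_eq_add_neg]

theorem coprodAffineAction_inr (v : V) (h : H) (w : V) :
    coprodAffineAction ρ v (inr h) w = ρ (inr h) w := by
  simp [coprodAffineAction, Units.smul_def, ρ.asGroupHom_apply]

theorem coprodAffineAction_apply (v : V) (x : G ∗ H) (w : V) :
    coprodAffineAction ρ v x w = ρ x w + coprodAffineAction ρ v x 0 := by
  induction x using induction_on generalizing w with
  | inl g => simp only [coprodAffineAction_inl, map_add, zero_add, add_sub_assoc]
  | inr h => simp only [coprodAffineAction_inr, map_zero, add_zero]
  | mul x y hx hy =>
    simp only [map_mul, Equiv.Perm.mul_apply, Module.End.mul_apply]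
    rw [hy, hx, hx (coprodAffineAction ρ v y 0), map_add, add_assoc]

theorem coprodAffineAction_orbit_mem (v : V) :
    (fun x => coprodAffineAction ρ v x 0) ∈ oneCocycles ρ := fun x y => by
  simp only [map_mul, Equiv.Perm.mul_apply]
  exact coprodAffineAction_apply ρ v x _

def coprodCocycle : V →ₗ[ℂ] oneCocycles ρ where
  toFun v := ⟨_, coprodAffineAction_orbit_mem ρ v⟩
  map_add' v w := by
    rw [Subtype.ext_iff, Submodule.coe_add]
    refine oneCocycles.coprod_ext ρ (coprodAffineAction_orbit_mem ρ _)
      (add_mem (coprodAffineAction_orbit_mem ρ v) (coprodAffineAction_orbit_mem ρ w))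
      (fun g => ?_) (fun h => ?_)
    · simp only [Pi.add_apply, coprodAffineAction_inl, zero_add, map_add]
      abel
    · simp only [Pi.add_apply, coprodAffineAction_inr, map_zero, add_zero]
  map_smul' c v := by
    rw [Subtype.ext_iff, Submodule.coe_smul]
    refine oneCocycles.coprod_ext ρ (coprodAffineAction_orbit_mem ρ _)
      (Submodule.smul_mem _ c (coprodAffineAction_orbit_mem ρ v)) (fun g => ?_) (fun h => ?_)
    · simp only [Pi.smul_apply, coprodAffineAction_inl, zero_add, map_smul, smul_sub,
        RingHom.id_apply]
    · simp only [Pi.smul_apply, coprodAffineAction_inr, map_zero, smul_zero, RingHom.id_apply]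

@[simp]
theorem coprodCocycle_inl (v : V) (g : G) :
    (coprodCocycle ρ v : G ∗ H → V) (inl g) = ρ (inl g) v - v := by
  simp [coprodCocycle, coprodAffineAction_inl]

@[simp]
theorem coprodCocycle_inr (v : V) (h : H) : (coprodCocycle ρ v : G ∗ H → V) (inr h) = 0 := by
  simp [coprodCocycle, coprodAffineAction_inr]

theorem ker_H1_mk_comp_coprodCocycle :
    LinearMap.ker (H1.mk ρ ∘ₗ coprodCocycle ρ) =
      invariants (ρ.comp inl) ⊔ invariants (ρ.comp inr) := by
  refine le_antisymm (fun v hv => ?_) (sup_le (fun v hv => ?_) fun v hv => ?_)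
  · obtain ⟨w, hw⟩ := (H1.mk_eq_zero_iff ρ).1 hv
    have hG (g : G) : ρ (inl g) w - w = ρ (inl g) v - v := by
      rw [← coboundary_apply, hw, coprodCocycle_inl]
    have hH (h : H) : ρ (inr h) w - w = 0 := by
      rw [← coboundary_apply, hw, coprodCocycle_inr]
    rw [← sub_add_cancel v w]
    refine Submodule.add_mem_sup (fun g => ?_) fun h => sub_eq_zero.1 (hH h)
    rw [MonoidHom.comp_apply, map_sub, ← sub_eq_zero, sub_sub_sub_comm, ← hG, sub_self]
  · refine (H1.mk_eq_zero_iff ρ).2 ⟨0, oneCocycles.coprod_ext ρ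
      (coboundary_mem_oneCocycles ρ 0) (coprodCocycle ρ v).2 (fun g => ?_) fun h => ?_⟩
    · rw [coprodCocycle_inl, map_zero, Pi.zero_apply, ← MonoidHom.comp_apply ρ inl, hv,
        sub_self]
    · rw [coprodCocycle_inr, map_zero, Pi.zero_apply]
  · refine (H1.mk_eq_zero_iff ρ).2 ⟨v, oneCocycles.coprod_ext ρ
      (coboundary_mem_oneCocycles ρ v) (coprodCocycle ρ v).2 (fun g => ?_) fun h => ?_⟩
    · rw [coprodCocycle_inl, coboundary_apply]
    · rw [coprodCocycle_inr, coboundary_apply, ← MonoidHom.comp_apply ρ inr, hv, sub_self]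

theorem H1_mk_comp_coprodCocycle_surjective [Fintype G] [Fintype H] :
    Function.Surjective (H1.mk ρ ∘ₗ coprodCocycle ρ) := by
  intro c
  obtain ⟨κ, rfl⟩ := H1.mk_surjective ρ c
  obtain ⟨w, hw⟩ := oneCocycles.exists_coboundary_eq_of_fintype (oneCocycles.comp_mem κ.2 inr)
  set κ' := κ - ⟨coboundary ρ w, coboundary_mem_oneCocycles ρ w⟩
  obtain ⟨v, hv⟩ := oneCocycles.exists_coboundary_eq_of_fintype (oneCocycles.comp_mem κ'.2 inl)
  have hκ' : coprodCocycle ρ v = κ' := Subtype.ext <|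
    oneCocycles.coprod_ext ρ (coprodCocycle ρ v).2 κ'.2
      (fun g => (coprodCocycle_inl ρ v g).trans (congrFun hv g))
      (fun h => by
        rw [coprodCocycle_inr, eq_comm]
        exact sub_eq_zero.2 (congrFun hw h).symm)
  refine ⟨v, ?_⟩
  rw [LinearMap.comp_apply, hκ', map_sub, H1.mk_coboundary, sub_zero]

end Coprod

theorem ZMod.mem_zpowers_ofAdd_one {n : ℕ} (x : Multiplicative (ZMod n)) :
    x ∈ Subgroup.zpowers (Multiplicative.ofAdd 1) := by
  obtain ⟨k, hk⟩ := ZMod.intCast_surjective x.toAdd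
  exact ⟨k, by simp [← ofAdd_zsmul, hk]⟩

theorem Representation.invariants_eq_ker_ofAdd_one_sub_id {k V : Type*} [CommRing k]
    [AddCommGroup V] [Module k V] {n : ℕ} (σ : Representation k (Multiplicative (ZMod n)) V) :
    σ.invariants = LinearMap.ker (σ (Multiplicative.ofAdd 1) - LinearMap.id) := by
  ext v
  rw [σ.mem_invariants_iff_of_forall_mem_zpowers _ ZMod.mem_zpowers_ofAdd_one, LinearMap.mem_ker,
    LinearMap.sub_apply, LinearMap.id_apply, sub_eq_zero]

theorem Module.finrank_eq_sub_of_surjective_of_ker_eq_sup {K V W : Type*} [DivisionRing K]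
    [AddCommGroup V] [Module K V] [AddCommGroup W] [Module K W] [FiniteDimensional K V]
    {f : V →ₗ[K] W} (hf : Function.Surjective f) {A B : Submodule K V}
    (hker : LinearMap.ker f = A ⊔ B) (hAB : A ⊓ B = ⊥) :
    finrank K W = finrank K V - finrank K A - finrank K B := by
  have hrank := LinearMap.finrank_range_add_finrank_ker f
  have hsup := Submodule.finrank_sup_add_finrank_inf_eq A B
  rw [LinearMap.range_eq_top.2 hf, finrank_top] at hrank
  rw [hAB, finrank_bot, ← hker] at hsup
  omega

/-- For `Γ = ℤ/pℤ ∗ ℤ/qℤ` and `ρ : Γ → GL(V)` finite-dimensional over `ℂ` with no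
nonzero fixed vectors, the map `v ↦ [κ_v]`, where `κ_v` is the 1-cocycle with
`κ_v(a) = ρ(a)v - v` and `κ_v(b) = 0`, is a surjective linear map `V → H¹(Γ, ρ)` with
kernel `V^A + V^B`; in particular `dim H¹(Γ, ρ) = dim V - dim V^A - dim V^B`. -/
theorem stmt_11 (p q : ℕ) [NeZero p] [NeZero q] {V : Type*}
    [AddCommGroup V] [Module ℂ V] [FiniteDimensional ℂ V]
    (ρ : Representation ℂ (Monoid.Coprod (Multiplicative (ZMod p)) (Multiplicative (ZMod q))) V)
    (hfix : ∀ v : V, (∀ γ, ρ γ v = v) → v = 0)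
    (a b : Monoid.Coprod (Multiplicative (ZMod p)) (Multiplicative (ZMod q)))
    (ha : a = Monoid.Coprod.inl (Multiplicative.ofAdd (1 : ZMod p)))
    (hb : b = Monoid.Coprod.inr (Multiplicative.ofAdd (1 : ZMod q))) :
    ∃ φ : V →ₗ[ℂ] H1 ρ,
      (∀ v : V, ∃ κ : oneCocycles ρ,
          (κ : _ → V) a = ρ a v - v ∧ (κ : _ → V) b = 0 ∧
          φ v = Submodule.Quotient.mk κ) ∧
      Function.Surjective φ ∧
      LinearMap.ker φ
        = LinearMap.ker (ρ a - LinearMap.id) ⊔ LinearMap.ker (ρ b - LinearMap.id) ∧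
      Module.finrank ℂ (H1 ρ)
        = Module.finrank ℂ V
          - Module.finrank ℂ (LinearMap.ker (ρ a - LinearMap.id))
          - Module.finrank ℂ (LinearMap.ker (ρ b - LinearMap.id)) := by
  subst ha hb
  have hA := Representation.invariants_eq_ker_ofAdd_one_sub_id (ρ.comp Monoid.Coprod.inl)
  have hB := Representation.invariants_eq_ker_ofAdd_one_sub_id (ρ.comp Monoid.Coprod.inr)
  have hsurj := H1_mk_comp_coprodCocycle_surjective ρ
  have hker := ker_H1_mk_comp_coprodCocycle ρ
  have hdisj := ρ.invariants_comp_inl_inf_invariants_comp_inr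
  have hinv : Representation.invariants ρ = ⊥ :=
    eq_bot_iff.2 fun v hv => (Submodule.mem_bot ℂ).2 (hfix v hv)
  rw [hA, hB] at hker hdisj
  rw [hinv] at hdisj
  exact ⟨_, fun v => ⟨coprodCocycle ρ v, coprodCocycle_inl .., coprodCocycle_inr .., rfl⟩,
    hsurj, hker, Module.finrank_eq_sub_of_surjective_of_ker_eq_sup hsurj hker hdisj⟩
end

section
/- Let Γ = ℤ/pℤ * ℤ/qℤ with generators a, b of orders p, q. For any representation ρ : Γ → GL(V) and any pair of vectors (u, w) ∈ V × V with ∑_{j=0}^{p−1} ρ(a)ʲ u = 0 and ∑_{j=0}^{q−1} ρ(b)ʲ w = 0, there exists a unique 1-cocycle κ : Γ → V with κ(a) = u and κ(b) = w. -/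
open Multiplicative

namespace Representation

variable {k G V : Type*} [CommSemiring k] [Group G] [AddCommGroup V] [Module k V]
  (ρ : Representation k G V)

-- `V` is made multiplicative so that Mathlib's semidirect product `N ⋊[φ] G` applies.
def toMulAut : G →* MulAut (Multiplicative V) where
  toFun g := AddEquiv.toMultiplicative
    (LinearMap.GeneralLinearGroup.toLinearEquiv (ρ.asGroupHom g)).toAddEquiv
  map_one' := by ext; simp
  map_mul' g h := by ext; simp

theorem semidirectProduct_mk_pow (v : V) (g : G) (n : ℕ) :
    (⟨ofAdd v, g⟩ : Multiplicative V ⋊[ρ.toMulAut] G) ^ n =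
      ⟨ofAdd (∑ j ∈ Finset.range n, (ρ g ^ j) v), g ^ n⟩ := by
  induction n with
  | zero => rw [pow_zero, pow_zero, Finset.sum_range_zero]; rfl
  | succ n ih =>
    rw [pow_succ', ih]
    refine SemidirectProduct.ext ?_ (pow_succ' g n).symm
    change ofAdd (v + ρ g (∑ j ∈ Finset.range n, (ρ g ^ j) v)) = _
    rw [map_sum, Finset.sum_range_succ', add_comm]
    simp only [pow_succ', Module.End.mul_apply, pow_zero, Module.End.one_apply]

end Representation

namespace oneCocycles

variable {Γ V : Type*} [Group Γ] [AddCommGroup V] [Module ℂ V] {ρ : Representation ℂ Γ V}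

theorem map_mul (κ : oneCocycles ρ) (g h : Γ) :
    (κ : Γ → V) (g * h) = ρ g ((κ : Γ → V) h) + (κ : Γ → V) g :=
  κ.2 g h

theorem map_one (κ : oneCocycles ρ) : (κ : Γ → V) 1 = 0 := by
  simpa using map_mul κ 1 1

theorem map_inv (κ : oneCocycles ρ) (g : Γ) :
    (κ : Γ → V) g⁻¹ = -ρ g⁻¹ ((κ : Γ → V) g) := by
  rw [eq_neg_iff_add_eq_zero, add_comm, ← map_mul, inv_mul_cancel, map_one]

def eqLocus (κ κ' : oneCocycles ρ) : Subgroup Γ where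
  carrier := {g | (κ : Γ → V) g = (κ' : Γ → V) g}
  one_mem' := (map_one κ).trans (map_one κ').symm
  mul_mem' {g h} (hg : (κ : Γ → V) g = (κ' : Γ → V) g)
      (hh : (κ : Γ → V) h = (κ' : Γ → V) h) := by
    change (κ : Γ → V) (g * h) = (κ' : Γ → V) (g * h)
    rw [map_mul, map_mul, hg, hh]
  inv_mem' {g} (hg : (κ : Γ → V) g = (κ' : Γ → V) g) := by
    change (κ : Γ → V) g⁻¹ = (κ' : Γ → V) g⁻¹
    rw [map_inv, map_inv, hg]

theorem eq_of_eqOn_dense {S : Set Γ} (hS : Subgroup.closure S = ⊤) {κ κ' : oneCocycles ρ}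
    (h : S.EqOn (κ : Γ → V) (κ' : Γ → V)) : κ = κ' := by
  have hκκ' : eqLocus κ κ' = ⊤ := top_unique (hS ▸ (Subgroup.closure_le _).2 h)
  exact Subtype.ext <| funext fun g => (hκκ' ▸ Subgroup.mem_top g : g ∈ eqLocus κ κ')

theorem left_mem_of_rightHom_comp_eq_id (s : Γ →* Multiplicative V ⋊[ρ.toMulAut] Γ)
    (hs : SemidirectProduct.rightHom.comp s = MonoidHom.id Γ) :
    (fun g => toAdd (s g).left) ∈ oneCocycles ρ := by
  intro g h
  have hsg : (s g).right = g := DFunLike.congr_fun hs g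
  change toAdd (s (g * h)).left = _
  rw [_root_.map_mul, SemidirectProduct.mul_left, hsg, add_comm]
  rfl

end oneCocycles

theorem ZMod.zpowers_ofAdd_one (n : ℕ) : Subgroup.zpowers (ofAdd (1 : ZMod n)) = ⊤ := by
  refine eq_top_iff.2 fun m _ => ?_
  obtain ⟨k, hk⟩ := ZMod.intCast_surjective (toAdd m)
  exact ⟨k, show ofAdd 1 ^ k = m by rw [← ofAdd_zsmul, zsmul_one, hk, ofAdd_toAdd]⟩

theorem ZMod.ofAdd_one_pow_self (n : ℕ) : ofAdd (1 : ZMod n) ^ n = 1 := by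
  rw [← ofAdd_nsmul, nsmul_one, ZMod.natCast_self, ofAdd_zero]

theorem ZMod.exists_monoidHom_ofAdd_one {G : Type*} [Group G] {n : ℕ} {x : G} (hx : x ^ n = 1) :
    ∃ f : Multiplicative (ZMod n) →* G, f (ofAdd 1) = x := by
  let f : {f : ℤ →+ Additive G // f n = 0} :=
    ⟨zmultiplesHom (Additive G) (Additive.ofMul x), by simpa [← ofMul_pow] using hx⟩
  refine ⟨AddMonoidHom.toMultiplicativeLeft (ZMod.lift n f), ?_⟩
  have hf := ZMod.lift_coe n f 1
  simp only [Int.cast_one, f, zmultiplesHom_apply, one_zsmul] at hf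
  exact congrArg Additive.toMul hf

theorem Monoid.Coprod.closure_inl_inr_eq_top {G H : Type*} [Group G] [Group H] {x : G} {y : H}
    (hx : Subgroup.zpowers x = ⊤) (hy : Subgroup.zpowers y = ⊤) :
    Subgroup.closure {(inl x : Monoid.Coprod G H), inr y} = ⊤ := by
  rw [eq_top_iff, ← closure_range_inl_union_inr, Subgroup.closure_le]
  rintro _ (⟨m, rfl⟩ | ⟨m, rfl⟩)
  · obtain ⟨k, rfl⟩ := Subgroup.mem_zpowers_iff.1 (hx ▸ Subgroup.mem_top m)
    exact (map_zpow (inl : G →* Monoid.Coprod G H) x k) ▸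
      zpow_mem (Subgroup.subset_closure (by simp)) k
  · obtain ⟨k, rfl⟩ := Subgroup.mem_zpowers_iff.1 (hy ▸ Subgroup.mem_top m)
    exact (map_zpow (inr : H →* Monoid.Coprod G H) y k) ▸
      zpow_mem (Subgroup.subset_closure (by simp)) k

theorem stmt_12_general (p q : ℕ) {V : Type*}
    [AddCommGroup V] [Module ℂ V]
    (ρ : Representation ℂ (Monoid.Coprod (Multiplicative (ZMod p)) (Multiplicative (ZMod q))) V)
    (a b : Monoid.Coprod (Multiplicative (ZMod p)) (Multiplicative (ZMod q)))
    (ha : a = Monoid.Coprod.inl (Multiplicative.ofAdd (1 : ZMod p)))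
    (hb : b = Monoid.Coprod.inr (Multiplicative.ofAdd (1 : ZMod q)))
    (u w : V)
    (hu : ∑ j ∈ Finset.range p, ((ρ a) ^ j) u = 0)
    (hw : ∑ j ∈ Finset.range q, ((ρ b) ^ j) w = 0) :
    ∃! κ : oneCocycles ρ, (κ : _ → V) a = u ∧ (κ : _ → V) b = w := by
  have hgen : Subgroup.closure {a, b} = ⊤ := ha ▸ hb ▸
    Monoid.Coprod.closure_inl_inr_eq_top (ZMod.zpowers_ofAdd_one p) (ZMod.zpowers_ofAdd_one q)
  have hap : a ^ p = 1 := by rw [ha, ← map_pow, ZMod.ofAdd_one_pow_self, map_one]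
  have hbq : b ^ q = 1 := by rw [hb, ← map_pow, ZMod.ofAdd_one_pow_self, map_one]
  obtain ⟨f₁, hf₁⟩ := ZMod.exists_monoidHom_ofAdd_one
    (x := (⟨ofAdd u, a⟩ : Multiplicative V ⋊[ρ.toMulAut] _))
    (by rw [ρ.semidirectProduct_mk_pow, hu, hap]; rfl)
  obtain ⟨f₂, hf₂⟩ := ZMod.exists_monoidHom_ofAdd_one
    (x := (⟨ofAdd w, b⟩ : Multiplicative V ⋊[ρ.toMulAut] _))
    (by rw [ρ.semidirectProduct_mk_pow, hw, hbq]; rfl)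
  let s := Monoid.Coprod.lift f₁ f₂
  have hsa : s a = ⟨ofAdd u, a⟩ := by rw [ha, Monoid.Coprod.lift_apply_inl, hf₁, ← ha]
  have hsb : s b = ⟨ofAdd w, b⟩ := by rw [hb, Monoid.Coprod.lift_apply_inr, hf₂, ← hb]
  have hs : SemidirectProduct.rightHom.comp s = MonoidHom.id _ :=
    MonoidHom.eq_of_eqOn_dense hgen <| by rintro _ (rfl | rfl) <;> simp [hsa, hsb]
  refine ⟨⟨_, oneCocycles.left_mem_of_rightHom_comp_eq_id s hs⟩, ⟨by simp [hsa], by simp [hsb]⟩, ?_⟩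
  rintro κ ⟨hκa, hκb⟩
  refine oneCocycles.eq_of_eqOn_dense hgen ?_
  rintro _ (rfl | rfl) <;> simp [hsa, hsb, hκa, hκb]

/-- For `Γ = ℤ/pℤ ∗ ℤ/qℤ` with generators `a` (order `p`) and `b` (order `q`), and any
representation `ρ : Γ → GL(V)`, any pair of vectors `u, w ∈ V` with
`∑_{j=0}^{p-1} ρ(a)ʲ u = 0` and `∑_{j=0}^{q-1} ρ(b)ʲ w = 0` extends to a unique
1-cocycle `κ : Γ → V` with `κ(a) = u` and `κ(b) = w`. -/
theorem stmt_12 (p q : ℕ) [NeZero p] [NeZero q] {V : Type*}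
    [AddCommGroup V] [Module ℂ V]
    (ρ : Representation ℂ (Monoid.Coprod (Multiplicative (ZMod p)) (Multiplicative (ZMod q))) V)
    (a b : Monoid.Coprod (Multiplicative (ZMod p)) (Multiplicative (ZMod q)))
    (ha : a = Monoid.Coprod.inl (Multiplicative.ofAdd (1 : ZMod p)))
    (hb : b = Monoid.Coprod.inr (Multiplicative.ofAdd (1 : ZMod q)))
    (u w : V)
    (hu : ∑ j ∈ Finset.range p, ((ρ a) ^ j) u = 0)
    (hw : ∑ j ∈ Finset.range q, ((ρ b) ^ j) w = 0) :
    ∃! κ : oneCocycles ρ, (κ : _ → V) a = u ∧ (κ : _ → V) b = w :=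
  stmt_12_general p q ρ a b ha hb u w hu hw
end
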